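/- arXiv:2406.13110 — 5 statements merged into one kernel-verified Lean document; each statement's English description precedes it below -/
import Mathlib

section
/- Let 𝓜 be a weight sequence, let α ∈ ℂ and δ ∈ ℝ with |α| ≤ |δ|, let p₀ ∈ ℝⁿ, and let q₀ > 0. Then condition (DC'𝓜) is equivalent to condition (DC''𝓜). -/
open scoped BigOperators
open MeasureTheory

noncomputable section

/-- A weight sequence in the sense of Denjoy–Carleman classes. -/
structure IsWeightSeq (m : ℕ → ℝ) : Prop where
  pos : ∀ j, 0 < m j
  m_zero : m 0 = 1
  m_one : m 1 = 1
  logconvex : ∀ j : ℕ, 1 ≤ j → m j ^ 2 ≤ m (j - 1) * m (j + 1)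
  bound : ∃ H : ℝ, 1 ≤ H ∧ ∀ j k : ℕ, 1 ≤ j + k →
    (m (j + k) / (m j * m k)) ^ ((1 : ℝ) / ((j + k : ℕ) : ℝ)) ≤ H

/-- Euclidean norm of an integer frequency vector. -/
def znorm {n : ℕ} (ξ : Fin n → ℤ) : ℝ := Real.sqrt (∑ i, ((ξ i : ℝ)) ^ 2)

/-- First-order partial derivative in the direction of the `i`-th coordinate. -/
def pd {n : ℕ} (i : Fin n) (f : (Fin n → ℝ) → ℂ) : (Fin n → ℝ) → ℂ :=
  fun x => fderiv ℝ f x (Pi.single i 1)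

/-- Iterated partial derivative `∂^α`. -/
def mpd {n : ℕ} (α : Fin n → ℕ) (f : (Fin n → ℝ) → ℂ) : (Fin n → ℝ) → ℂ :=
  ((List.ofFn fun i : Fin n => (pd i)^[α i]).foldr (· ∘ ·) id) f

/-- Membership in the Denjoy–Carleman (Roumieu) class `E_𝓜(𝕋ⁿ)`:
smooth, `2π`-periodic in each variable, with the `𝓜`-ultradifferentiable bounds. -/
def InEM {n : ℕ} (m : ℕ → ℝ) (f : (Fin n → ℝ) → ℂ) : Prop :=
  ContDiff ℝ (⊤ : ℕ∞) f ∧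
  (∀ (x : Fin n → ℝ) (i : Fin n), f (x + Pi.single i (2 * Real.pi)) = f x) ∧
  ∃ C h : ℝ, 0 < C ∧ 0 < h ∧ ∀ (α : Fin n → ℕ) (x : Fin n → ℝ),
    ‖mpd α f x‖ ≤
      C * h ^ (∑ i, α i) * m (∑ i, α i) * (Nat.factorial (∑ i, α i) : ℝ)

/-- `inf_{j∈ℕ₀} m_j·j!/(ε^j·(1+R)^j)`. -/
def MInf (m : ℕ → ℝ) (ε R : ℝ) : ℝ :=
  ⨅ j : ℕ, m j * (Nat.factorial j : ℝ) / (ε ^ j * (1 + R) ^ j)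

/-- `sup_{j∈ℕ₀} ε^j·(1+R)^j/(m_j·j!)`. -/
def MSup (m : ℕ → ℝ) (ε R : ℝ) : ℝ :=
  ⨆ j : ℕ, ε ^ j * (1 + R) ^ j / (m j * (Nat.factorial j : ℝ))

/-- The Diophantine condition (DC𝓜) for a family `D ξ` (ξ ∈ ℤⁿ). -/
def DCM {n : ℕ} (m : ℕ → ℝ) (D : (Fin n → ℤ) → ℂ) : Prop :=
  ∀ ε : ℝ, 0 < ε → ∃ Cε γε : ℝ, 0 < Cε ∧ 0 < γε ∧
    ∀ ξ : Fin n → ℤ, γε ≤ znorm ξ → Cε * MInf m ε (znorm ξ) ≤ ‖D ξ‖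

/-- `𝓜`-solvability: there is a subspace `F ⊆ E_𝓜(𝕋ⁿ)` of finite codimension in
`E_𝓜(𝕋ⁿ)` such that `P u = f` has a solution `u ∈ E_𝓜(𝕋ⁿ)` for every `f ∈ F`. -/
def MSolvable {n : ℕ} (m : ℕ → ℝ)
    (P : ((Fin n → ℝ) → ℂ) → (Fin n → ℝ) → ℂ) : Prop :=
  ∃ F : Set ((Fin n → ℝ) → ℂ),
    (∀ f ∈ F, InEM m f) ∧
    (0 : (Fin n → ℝ) → ℂ) ∈ F ∧
    (∀ f g : (Fin n → ℝ) → ℂ, f ∈ F → g ∈ F → f + g ∈ F) ∧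
    (∀ (a : ℂ) (f : (Fin n → ℝ) → ℂ), f ∈ F → a • f ∈ F) ∧
    (∃ (k : ℕ) (g : Fin k → (Fin n → ℝ) → ℂ), (∀ i, InEM m (g i)) ∧
      ∀ f : (Fin n → ℝ) → ℂ, InEM m f →
        ∃ f₀ ∈ F, ∃ a : Fin k → ℂ, f = f₀ + ∑ i, a i • g i) ∧
    ∀ f ∈ F, ∃ u, InEM m u ∧ P u = f

/-- Fourier coefficient `f̂(ξ) = (2π)^{-n} ∫_{[0,2π]ⁿ} f(x) e^{-iξ·x} dx`. -/
def fcoef {n : ℕ} (f : (Fin n → ℝ) → ℂ) (ξ : Fin n → ℤ) : ℂ :=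
  (1 / (2 * Real.pi : ℂ) ^ n) *
    ∫ x in Set.Icc (0 : Fin n → ℝ) (fun _ => 2 * Real.pi),
      f x * Complex.exp (-Complex.I * ∑ i, (ξ i : ℂ) * (x i : ℂ))

/-- `𝓜`-ultradistributional growth of a family of Fourier coefficients. -/
def UltraGrowth {n : ℕ} (m : ℕ → ℝ) (u : (Fin n → ℤ) → ℂ) : Prop :=
  ∀ ε : ℝ, 0 < ε → ∃ C : ℝ, 0 < C ∧ ∀ ξ, ‖u ξ‖ ≤ C * MSup m ε (znorm ξ)

/-- `E_𝓜`-decay of a family of Fourier coefficients. -/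
def EMdecay {n : ℕ} (m : ℕ → ℝ) (u : (Fin n → ℤ) → ℂ) : Prop :=
  ∃ C δ : ℝ, 0 < C ∧ 0 < δ ∧ ∀ ξ, ‖u ξ‖ ≤ C * MInf m δ (znorm ξ)

/-- `𝓜`-global hypoellipticity of the Vekua-type operator with symbol `σ`,
expressed on the Fourier side. -/
def MGH {n : ℕ} (m : ℕ → ℝ) (σ : (Fin n → ℤ) → ℂ) (A B : ℂ) : Prop :=
  ∀ (f : (Fin n → ℝ) → ℂ) (u : (Fin n → ℤ) → ℂ),
    InEM m f → UltraGrowth m u →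
    (∀ ξ, (σ ξ - A) * u ξ - B * (starRingEnd ℂ) (u (-ξ)) = fcoef f ξ) →
    EMdecay m u


/-- Condition (DC'𝓜): for all `ε > 0` there are `γ_ε, C_ε > 0` such that for all
`(ξ,τ) ∈ ℤⁿ×ℤ` with `‖ξ‖ ≥ γ_ε`,
`|2πτ + 2π(ξ·p₀) − q₀√(δ² − |α|²)| ≥ C_ε · inf_j m_j·j!/(ε^j·(1+‖ξ‖)^j)`. -/
def DCprime {n : ℕ} (m : ℕ → ℝ) (p₀ : Fin n → ℝ) (q₀ : ℝ) (a : ℂ) (δ : ℝ) : Prop :=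
  ∀ ε : ℝ, 0 < ε → ∃ γε Cε : ℝ, 0 < γε ∧ 0 < Cε ∧
    ∀ (ξ : Fin n → ℤ) (τ : ℤ), γε ≤ znorm ξ →
      Cε * MInf m ε (znorm ξ) ≤
        |2 * Real.pi * (τ : ℝ) + 2 * Real.pi * (∑ j, (ξ j : ℝ) * p₀ j)
          - q₀ * Real.sqrt (δ ^ 2 - ‖a‖ ^ 2)|

/-- Condition (DC''𝓜): for all `ε > 0` there are `γ_ε, C_ε > 0` such that for all
`ξ ∈ ℤⁿ` with `‖ξ‖ ≥ γ_ε`,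
`|e^{i(2π(ξ·p₀) − q₀√(δ² − |α|²))} − 1| ≥ C_ε · inf_j m_j·j!/(ε^j·(1+‖ξ‖)^j)`. -/
def DCdprime {n : ℕ} (m : ℕ → ℝ) (p₀ : Fin n → ℝ) (q₀ : ℝ) (a : ℂ) (δ : ℝ) : Prop :=
  ∀ ε : ℝ, 0 < ε → ∃ γε Cε : ℝ, 0 < γε ∧ 0 < Cε ∧
    ∀ ξ : Fin n → ℤ, γε ≤ znorm ξ →
      Cε * MInf m ε (znorm ξ) ≤
        ‖Complex.exp (Complex.I *
            (((2 * Real.pi * (∑ j, (ξ j : ℝ) * p₀ j)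
              - q₀ * Real.sqrt (δ ^ 2 - ‖a‖ ^ 2) : ℝ)) : ℂ)) - 1‖

lemma abs_exp_I_mul_sub_one (x : ℝ) :
    ‖Complex.exp (Complex.I * (x : ℂ)) - 1‖ = 2 * |Real.sin (x / 2)| := by
  have h1 : Complex.exp (Complex.I * (x : ℂ)) - 1
      = ((Real.cos x - 1 : ℝ) : ℂ) + ((Real.sin x : ℝ) : ℂ) * Complex.I := by
    rw [mul_comm, Complex.exp_mul_I, ← Complex.ofReal_cos, ← Complex.ofReal_sin]
    push_cast; ring
  rw [h1, Complex.norm_add_mul_I]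
  have h2 : Real.sin (x / 2) ^ 2 = 1 / 2 - Real.cos x / 2 := by
    have := Real.sin_sq_eq_half_sub (x / 2)
    rwa [show 2 * (x / 2) = x by ring] at this
  have h3 := Real.sin_sq_add_cos_sq x
  have h4 : ((Real.cos x - 1) ^ 2 + Real.sin x ^ 2) = (2 * |Real.sin (x / 2)|) ^ 2 := by
    rw [mul_pow, sq_abs]; nlinarith
  rw [h4, Real.sqrt_sq (by positivity)]

lemma abs_sin_add_int_mul_pi (x : ℝ) (τ : ℤ) : |Real.sin (x + τ * Real.pi)| = |Real.sin x| := by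
  rw [Real.sin_add_int_mul_pi, abs_mul]
  rcases Int.even_or_odd τ with h | h
  · rw [h.neg_one_zpow]; simp
  · rw [h.neg_one_zpow]; simp

lemma exp_sub_one_le (x : ℝ) (τ : ℤ) :
    ‖Complex.exp (Complex.I * (x : ℂ)) - 1‖ ≤ |2 * Real.pi * τ + x| := by
  rw [abs_exp_I_mul_sub_one]
  have h1 : |Real.sin (x / 2)| = |Real.sin (x / 2 + τ * Real.pi)| :=
    (abs_sin_add_int_mul_pi (x / 2) τ).symm
  have h2 : |Real.sin (x / 2 + τ * Real.pi)| ≤ |x / 2 + τ * Real.pi| :=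
    Real.abs_sin_le_abs
  have h3 : 2 * |x / 2 + τ * Real.pi| = |2 * Real.pi * τ + x| := by
    rw [show (2 : ℝ) * Real.pi * τ + x = 2 * (x / 2 + τ * Real.pi) by ring, abs_mul]
    simp
  calc 2 * |Real.sin (x / 2)| ≤ 2 * |x / 2 + τ * Real.pi| := by rw [h1]; linarith
    _ = _ := h3

lemma exists_int_le_exp_sub_one (x : ℝ) :
    ∃ τ : ℤ, 2 / Real.pi * |2 * Real.pi * τ + x|
      ≤ ‖Complex.exp (Complex.I * (x : ℂ)) - 1‖ := by
  have hπ := Real.pi_pos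
  set r : ℤ := round (x / (2 * Real.pi)) with hr
  refine ⟨-r, ?_⟩
  set y : ℝ := 2 * Real.pi * (-r : ℤ) + x with hy
  have hy2 : |y| ≤ Real.pi := by
    have h := abs_sub_round (x / (2 * Real.pi))
    have : y = 2 * Real.pi * (x / (2 * Real.pi) - r) := by
      rw [hy]; push_cast; field_simp; ring
    rw [this, abs_mul, abs_of_pos (by positivity : (0:ℝ) < 2 * Real.pi)]
    nlinarith
  rw [abs_exp_I_mul_sub_one]
  have hx2 : x / 2 = y / 2 + r * Real.pi := by rw [hy]; push_cast; ring
  have hsin : |Real.sin (x / 2)| = |Real.sin (y / 2)| := by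
    rw [hx2, abs_sin_add_int_mul_pi]
  have habs : Real.sin (|y| / 2) = |Real.sin (y / 2)| := by
    rcases le_or_gt 0 y with h | h
    · rw [abs_of_nonneg h, abs_of_nonneg (Real.sin_nonneg_of_nonneg_of_le_pi
        (by linarith) (by rw [abs_of_nonneg h] at hy2; linarith))]
    · rw [abs_of_neg h, abs_of_nonpos (Real.sin_nonpos_of_nonpos_of_neg_pi_le
        (by linarith) (by rw [abs_of_neg h] at hy2; linarith)),
        show -y / 2 = -(y / 2) by ring, Real.sin_neg]
  have hjordan : 2 / Real.pi * (|y| / 2) ≤ Real.sin (|y| / 2) :=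
    Real.mul_le_sin (by positivity) (by linarith)
  calc 2 / Real.pi * |y| = 2 * (2 / Real.pi * (|y| / 2)) := by ring
    _ ≤ 2 * Real.sin (|y| / 2) := by linarith
    _ = 2 * |Real.sin (y / 2)| := by rw [habs]
    _ = 2 * |Real.sin (x / 2)| := by rw [hsin]


/-- For `|α| ≤ |δ|`, `p₀ ∈ ℝⁿ` and `q₀ > 0`, condition (DC'𝓜)
is equivalent to condition (DC''𝓜). -/
theorem DCprime_iff_DCdprime {n : ℕ} (m : ℕ → ℝ) (hm : IsWeightSeq m)
    (a : ℂ) (δ : ℝ) (hαδ : ‖a‖ ≤ |δ|)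
    (p₀ : Fin n → ℝ) (q₀ : ℝ) (hq₀ : 0 < q₀) :
    DCprime m p₀ q₀ a δ ↔ DCdprime m p₀ q₀ a δ := by
  have hπ := Real.pi_pos
  constructor
  · intro h ε hε
    obtain ⟨γ, C, hγ, hC, hspec⟩ := h ε hε
    refine ⟨γ, 2 / Real.pi * C, hγ, by positivity, ?_⟩
    intro ξ hξ
    set θ : ℝ := 2 * Real.pi * (∑ j, (ξ j : ℝ) * p₀ j)
      - q₀ * Real.sqrt (δ ^ 2 - ‖a‖ ^ 2) with hθ
    obtain ⟨τ, hτ⟩ := exists_int_le_exp_sub_one θ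
    have h1 : C * MInf m ε (znorm ξ) ≤ |2 * Real.pi * (τ : ℝ) + θ| := by
      have := hspec ξ τ hξ
      convert this using 2
      rw [hθ]; ring
    calc 2 / Real.pi * C * MInf m ε (znorm ξ)
        = 2 / Real.pi * (C * MInf m ε (znorm ξ)) := by ring
      _ ≤ 2 / Real.pi * |2 * Real.pi * (τ : ℝ) + θ| := by
          apply mul_le_mul_of_nonneg_left h1 (by positivity)
      _ ≤ _ := hτ
  · intro h ε hε
    obtain ⟨γ, C, hγ, hC, hspec⟩ := h ε hε
    refine ⟨γ, C, hγ, hC, ?_⟩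
    intro ξ τ hξ
    set θ : ℝ := 2 * Real.pi * (∑ j, (ξ j : ℝ) * p₀ j)
      - q₀ * Real.sqrt (δ ^ 2 - ‖a‖ ^ 2) with hθ
    refine (hspec ξ hξ).trans ((exp_sub_one_le θ τ).trans_eq ?_)
    congr 1
    rw [hθ]; ring

end
end

section
/- For every integer k ≥ 1 and every real R > 0, Σ_{γ∈Δ(k)} (|γ|!/γ!)·R^{|γ|} = R·(1+R)^{k−1}, where Δ(k) = { γ = (γ_1,…,γ_k) ∈ ℕ₀^k : Σ_{ℓ=1}^{k} ℓ·γ_ℓ = k }, |γ| = γ_1 + ⋯ + γ_k, and γ! = γ_1!⋯γ_k!. -/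
open scoped BigOperators

open Polynomial Finset

lemma coeff_geom_pow (N m d : ℕ) (hd : d < N) :
    (((∑ j ∈ Finset.range N, (X : ℝ[X]) ^ j)) ^ (m + 1)).coeff d
      = ((d + m).choose m : ℝ) := by
  induction m generalizing d with
  | zero =>
    simp [finset_sum_coeff, coeff_X_pow, Finset.sum_ite_eq, hd]
  | succ m ih =>
    rw [pow_succ', coeff_mul, Finset.Nat.sum_antidiagonal_eq_sum_range_succ_mk]
    have h1 : ∀ i ∈ Finset.range (d + 1),
        ((∑ j ∈ Finset.range N, (X : ℝ[X]) ^ j)).coeff i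
          * ((∑ j ∈ Finset.range N, (X : ℝ[X]) ^ j) ^ (m + 1)).coeff (d - i)
        = (((d - i) + m).choose m : ℝ) := by
      intro i hi
      rw [Finset.mem_range] at hi
      have hiN : i < N := lt_of_le_of_lt (Nat.lt_succ_iff.mp hi) hd
      rw [ih (d - i) (lt_of_le_of_lt (Nat.sub_le _ _) hd)]
      simp [finset_sum_coeff, coeff_X_pow, Finset.sum_ite_eq, hiN]
    rw [Finset.sum_congr rfl h1, ← Finset.sum_range_reflect]
    have : ∀ i ∈ Finset.range (d + 1),
        (((d - (d + 1 - 1 - i)) + m).choose m : ℝ) = ((i + m).choose m : ℝ) := by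
      intro i hi
      rw [Finset.mem_range] at hi
      congr 2
      omega
    rw [Finset.sum_congr rfl this, ← Nat.cast_sum]
    norm_cast
    rw [Nat.sum_range_add_choose d m]
    congr 1

lemma coeff_p_pow (k m : ℕ) (R : ℝ) (hm : 1 ≤ m) (hmk : m ≤ k) :
    ((∑ i : Fin k, Polynomial.C R * (X : ℝ[X]) ^ (i.1 + 1)) ^ m).coeff k
      = ((k - 1).choose (m - 1) : ℝ) * R ^ m := by
  have hp : (∑ i : Fin k, Polynomial.C R * (X : ℝ[X]) ^ (i.1 + 1))
      = Polynomial.C R * X * ∑ j ∈ range k, (X : ℝ[X]) ^ j := by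
    rw [Finset.mul_sum, Fin.sum_univ_eq_sum_range (fun i => Polynomial.C R * (X:ℝ[X]) ^ (i+1)) k]
    exact Finset.sum_congr rfl fun j _ => by ring
  obtain ⟨d, rfl⟩ : ∃ d, k = d + m := ⟨k - m, by omega⟩
  obtain ⟨m', rfl⟩ : ∃ m', m = m' + 1 := ⟨m - 1, by omega⟩
  rw [hp, mul_pow, mul_pow, ← Polynomial.C_pow, mul_assoc, Polynomial.coeff_C_mul,
    Polynomial.coeff_X_pow_mul, coeff_geom_pow _ _ _ (by omega)]
  have : d + m' = d + (m' + 1) - 1 := by omega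
  rw [this, Nat.add_sub_cancel]
  ring

/-- For `k ≥ 1` and `R > 0`,
`Σ_{γ∈Δ(k)} (|γ|!/γ!)·R^{|γ|} = R·(1+R)^{k−1}`, where
`Δ(k) = {γ ∈ ℕ₀^k : Σ_ℓ ℓ·γ_ℓ = k}`. (Every `γ ∈ Δ(k)` has `γ_ℓ ≤ k`, so `Δ(k)` is
faithfully enumerated by the bounded multi-indices `γ : Fin k → Fin (k+1)`.) -/
theorem sum_over_Delta_k (k : ℕ) (hk : 1 ≤ k) (R : ℝ) (hR : 0 < R) :
    (∑ γ : Fin k → Fin (k + 1),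
        if ∑ i : Fin k, (i.1 + 1) * (γ i : ℕ) = k then
          ((Nat.factorial (∑ i : Fin k, (γ i : ℕ)) : ℝ) /
              ∏ i : Fin k, (Nat.factorial (γ i : ℕ) : ℝ)) * R ^ (∑ i : Fin k, (γ i : ℕ))
        else 0) = R * (1 + R) ^ (k - 1) := by
  classical
  set g : (Fin k → ℕ) → ℝ := fun f =>
    if ∑ i : Fin k, (i.1 + 1) * f i = k
    then (Nat.multinomial Finset.univ f : ℝ) * R ^ (∑ i : Fin k, f i) else 0 with hg
  -- the cast of multinomial
  have hmult : ∀ f : Fin k → ℕ,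
      ((Nat.factorial (∑ i : Fin k, f i) : ℝ) / ∏ i : Fin k, (Nat.factorial (f i) : ℝ))
        = (Nat.multinomial Finset.univ f : ℝ) := by
    intro f
    have hspec := Nat.multinomial_spec Finset.univ f
    have hcast : ((∏ i : Fin k, Nat.factorial (f i) : ℕ) : ℝ)
        * (Nat.multinomial Finset.univ f : ℝ) = (Nat.factorial (∑ i : Fin k, f i) : ℝ) := by
      exact_mod_cast congrArg (Nat.cast : ℕ → ℝ) hspec
    push_cast at hcast
    have hne : (∏ i : Fin k, (Nat.factorial (f i) : ℝ)) ≠ 0 :=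
      Finset.prod_ne_zero_iff.2 fun i _ => Nat.cast_ne_zero.2 (Nat.factorial_ne_zero _)
    field_simp
    linarith [hcast]
  -- Step I+II : LHS as a sum of g over the image finset
  have step1 : (∑ γ : Fin k → Fin (k + 1),
        if ∑ i : Fin k, (i.1 + 1) * (γ i : ℕ) = k then
          ((Nat.factorial (∑ i : Fin k, (γ i : ℕ)) : ℝ) /
              ∏ i : Fin k, (Nat.factorial (γ i : ℕ) : ℝ)) * R ^ (∑ i : Fin k, (γ i : ℕ))
        else 0)
      = ∑ f ∈ (Finset.univ : Finset (Fin k → Fin (k+1))).image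
          (fun γ i => (γ i : ℕ)), g f := by
    rw [Finset.sum_image (by
      intro γ _ γ' _ h
      funext i
      exact Fin.val_injective (congrFun h i))]
    refine Finset.sum_congr rfl fun γ _ => ?_
    rw [hg]
    simp only
    split_ifs with h
    · rw [hmult]
    · rfl
  -- Step III : switch to the biUnion of piAntidiags
  have step3 : (∑ f ∈ (Finset.univ : Finset (Fin k → Fin (k+1))).image
          (fun γ i => (γ i : ℕ)), g f)
      = ∑ f ∈ (Finset.range (k+1)).biUnion (fun m => Finset.piAntidiag Finset.univ m), g f := by
    have hzero : ∀ (s : Finset (Fin k → ℕ)),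
        ∑ f ∈ s, g f = ∑ f ∈ s.filter (fun f => ∑ i : Fin k, (i.1 + 1) * f i = k), g f := by
      intro s
      rw [Finset.sum_filter_of_ne]
      intro f _ hf
      by_contra h
      exact hf (by rw [hg]; simp [h])
    rw [hzero ((Finset.univ : Finset (Fin k → Fin (k+1))).image (fun γ i => (γ i : ℕ))),
      hzero ((Finset.range (k+1)).biUnion (fun m => Finset.piAntidiag Finset.univ m))]
    congr 1
    ext f
    constructor
    · intro hf
      rw [Finset.mem_filter] at hf ⊢
      obtain ⟨hmem, hw⟩ := hf
      have hle : (∑ i : Fin k, f i) ≤ ∑ i : Fin k, (i.1 + 1) * f i :=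
        Finset.sum_le_sum fun i _ =>
          (Nat.le_mul_of_pos_left _ (Nat.succ_pos _) : f i ≤ (i.1 + 1) * f i)
      refine ⟨Finset.mem_biUnion.2 ⟨∑ i : Fin k, f i, Finset.mem_range.2 (by omega),
        (Finset.mem_piAntidiag).2 ⟨rfl, fun i _ => Finset.mem_univ i⟩⟩, hw⟩
    · intro hf
      rw [Finset.mem_filter] at hf ⊢
      obtain ⟨hmem, hw⟩ := hf
      have hb : ∀ i : Fin k, f i < k + 1 := by
        intro i
        have h1 : (i.1 + 1) * f i ≤ k := by
          have h0 : (i.1 + 1) * f i ≤ ∑ j : Fin k, (j.1 + 1) * f j :=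
            Finset.single_le_sum (f := fun j : Fin k => (j.1 + 1) * f j)
              (fun j _ => Nat.zero_le _) (Finset.mem_univ i)
          omega
        have h2 : f i ≤ (i.1 + 1) * f i := Nat.le_mul_of_pos_left _ (Nat.succ_pos _)
        omega
      exact ⟨Finset.mem_image.2 ⟨fun i => ⟨f i, hb i⟩, Finset.mem_univ _, rfl⟩, hw⟩
  -- Step IV : biUnion to double sum
  have step4 : (∑ f ∈ (Finset.range (k+1)).biUnion
        (fun m => Finset.piAntidiag Finset.univ m), g f)
      = ∑ m ∈ Finset.range (k+1), ∑ f ∈ Finset.piAntidiag (Finset.univ : Finset (Fin k)) m,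
          g f := by
    refine Finset.sum_biUnion ?_
    intro a _ b _ hab
    simp only [Function.onFun]
    rw [Finset.disjoint_left]
    intro f hfa hfb
    rw [Finset.mem_piAntidiag] at hfa hfb
    exact hab (hfa.1 ▸ hfb.1 ▸ rfl)
  -- Step V : each inner sum is a coefficient
  have step5 : ∀ m : ℕ, (∑ f ∈ Finset.piAntidiag (Finset.univ : Finset (Fin k)) m, g f)
      = ((∑ i : Fin k, Polynomial.C R * (X : ℝ[X]) ^ (i.1 + 1)) ^ m).coeff k := by
    intro m
    rw [Finset.sum_pow_eq_sum_piAntidiag, Polynomial.finset_sum_coeff]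
    refine Finset.sum_congr rfl fun f hf => ?_
    rw [Finset.mem_piAntidiag] at hf
    have hprod : (∏ i : Fin k, (Polynomial.C R * (X : ℝ[X]) ^ (i.1 + 1)) ^ f i)
        = Polynomial.C (R ^ (∑ i : Fin k, f i)) * X ^ (∑ i : Fin k, (i.1 + 1) * f i) := by
      simp_rw [mul_pow, ← pow_mul]
      rw [Finset.prod_mul_distrib, Finset.prod_pow_eq_pow_sum, Finset.prod_pow_eq_pow_sum,
        Polynomial.C_pow]
    rw [hprod, ← mul_assoc]
    have : ((Nat.multinomial Finset.univ f : ℝ[X]))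
        * Polynomial.C (R ^ (∑ i : Fin k, f i))
        = Polynomial.C ((Nat.multinomial Finset.univ f : ℝ) * R ^ (∑ i : Fin k, f i)) := by
      rw [← Polynomial.C_eq_natCast, ← Polynomial.C_mul]
    rw [this, Polynomial.coeff_C_mul, Polynomial.coeff_X_pow, hg]
    simp only [hf.1]
    split_ifs with h1 h2 h2
    · ring
    · exact absurd h1.symm h2
    · exact absurd h2.symm h1
    · ring
  rw [step1, step3, step4]
  rw [Finset.sum_congr rfl fun m _ => step5 m]
  -- Step VI + VII : evaluate the coefficients
  rw [Finset.sum_range_succ']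
  have h0 : ((∑ i : Fin k, Polynomial.C R * (X : ℝ[X]) ^ (i.1 + 1)) ^ 0).coeff k = 0 := by
    rw [pow_zero, Polynomial.coeff_one]
    rw [if_neg (by omega)]
  rw [h0, add_zero]
  rw [Finset.sum_congr rfl fun j hj => coeff_p_pow k (j+1) R (Nat.le_add_left 1 j)
    (by rw [Finset.mem_range] at hj; omega)]
  simp only [Nat.add_sub_cancel]
  have hbin : (1 + R) ^ (k - 1) = ∑ j ∈ Finset.range k, R ^ j * ((k-1).choose j : ℝ) := by
    have := add_pow R 1 (k - 1)
    simp only [one_pow, mul_one] at this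
    rw [add_comm 1 R, this]
    have hkk : k - 1 + 1 = k := by omega
    rw [hkk]
  rw [hbin, Finset.mul_sum]
  refine Finset.sum_congr rfl fun j _ => ?_
  ring
end

section
/- Let 𝓜 = (m_j)_{j∈ℕ₀} be a weight sequence, let k ≥ 1, and let γ = (γ_1,…,γ_k) ∈ Δ(k), where Δ(k) = { γ ∈ ℕ₀^k : Σ_{ℓ=1}^{k} ℓ·γ_ℓ = k } and |γ| = γ_1 + ⋯ + γ_k. Then m_{|γ|}·m_1^{γ_1}·m_2^{γ_2}·⋯·m_k^{γ_k} ≤ m_k. -/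
open scoped BigOperators

/-!
Log-convexity makes the quotients `m (j + t) / m j` increasing in `j` for each fixed `t`.
Together with `m 1 = 1` this yields `m (n + 1) * m ℓ * m S ≤ m n * m (S + ℓ)` for `n ≤ S` and
`ℓ ≥ 1`, so adding a part `ℓ` to a partition of `S` into `n` parts preserves the inequality
`m (#parts) * ∏ m (part) ≤ m (∑ parts)`. The multi-index `γ` is the partition of `k` with
`γ_ℓ` parts equal to `ℓ`.
-/

namespace IsWeightSeq

lemma logconvex_succ {m : ℕ → ℝ} (hm : IsWeightSeq m) (j : ℕ) :
    m (j + 1) ^ 2 ≤ m j * m (j + 2) :=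
  hm.logconvex (j + 1) (Nat.le_add_left 1 j)

end IsWeightSeq

section LogConvex

variable {m : ℕ → ℝ}

lemma monotone_succ_div (hpos : ∀ j, 0 < m j) (hlc : ∀ j, m (j + 1) ^ 2 ≤ m j * m (j + 2)) :
    Monotone fun j => m (j + 1) / m j := by
  refine monotone_nat_of_le_succ fun j => ?_
  rw [div_le_div_iff₀ (hpos j) (hpos (j + 1))]
  nlinarith [hlc j]

lemma monotone_add_div (hpos : ∀ j, 0 < m j) (hlc : ∀ j, m (j + 1) ^ 2 ≤ m j * m (j + 2))
    (t : ℕ) : Monotone fun j => m (j + t) / m j := by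
  induction t with
  | zero => simp only [Nat.add_zero, div_self (hpos _).ne', monotone_const]
  | succ t ih =>
    intro a b hab
    have hsucc := monotone_succ_div hpos hlc (Nat.add_le_add_right hab t)
    calc m (a + (t + 1)) / m a = m (a + t + 1) / m (a + t) * (m (a + t) / m a) := by
          rw [div_mul_div_cancel₀ (hpos _).ne', Nat.add_assoc]
      _ ≤ m (b + t + 1) / m (b + t) * (m (b + t) / m b) :=
          mul_le_mul hsucc (ih hab) (div_nonneg (hpos _).le (hpos _).le)
            (div_nonneg (hpos _).le (hpos _).le)
      _ = m (b + (t + 1)) / m b := by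
          rw [div_mul_div_cancel₀ (hpos _).ne', Nat.add_assoc]

lemma mul_mul_le_mul_add (hpos : ∀ j, 0 < m j) (hlc : ∀ j, m (j + 1) ^ 2 ≤ m j * m (j + 2))
    (hm1 : m 1 = 1) {n S ℓ : ℕ} (hnS : n ≤ S) (hℓ : 1 ≤ ℓ) :
    m (n + 1) * m ℓ * m S ≤ m n * m (S + ℓ) := by
  have hlow : m (1 + n) / m 1 ≤ m (ℓ + n) / m ℓ := monotone_add_div hpos hlc n hℓ
  have hshift : m (n + ℓ) / m n ≤ m (S + ℓ) / m S := monotone_add_div hpos hlc ℓ hnS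
  rw [hm1, div_one, le_div_iff₀ (hpos ℓ), add_comm 1, add_comm ℓ] at hlow
  rw [div_le_div_iff₀ (hpos n) (hpos S)] at hshift
  calc m (n + 1) * m ℓ * m S ≤ m (n + ℓ) * m S := mul_le_mul_of_nonneg_right hlow (hpos S).le
    _ ≤ m n * m (S + ℓ) := by linarith

lemma mul_prod_map_le_sum (hpos : ∀ j, 0 < m j) (hlc : ∀ j, m (j + 1) ^ 2 ≤ m j * m (j + 2))
    (hm1 : m 1 = 1) (s : Multiset ℕ) (hs : ∀ ℓ ∈ s, 1 ≤ ℓ) :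
    m (Multiset.card s) * (s.map m).prod ≤ m s.sum := by
  induction s using Multiset.induction with
  | empty => simp
  | cons ℓ s ih =>
    have hs' : ∀ x ∈ s, 1 ≤ x := fun x hx => hs x (Multiset.mem_cons_of_mem hx)
    have hcard : Multiset.card s ≤ s.sum := by
      simpa using Multiset.card_nsmul_le_sum hs'
    rw [Multiset.card_cons, Multiset.map_cons, Multiset.prod_cons, Multiset.sum_cons, add_comm ℓ]
    refine le_of_mul_le_mul_left ?_ (hpos (Multiset.card s))
    calc m (Multiset.card s) * (m (Multiset.card s + 1) * (m ℓ * (s.map m).prod))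
        = m (Multiset.card s + 1) * m ℓ * (m (Multiset.card s) * (s.map m).prod) := by ring
      _ ≤ m (Multiset.card s + 1) * m ℓ * m s.sum :=
        mul_le_mul_of_nonneg_left (ih hs') (mul_pos (hpos _) (hpos ℓ)).le
      _ ≤ m (Multiset.card s) * m (s.sum + ℓ) :=
        mul_mul_le_mul_add hpos hlc hm1 hcard (hs ℓ (Multiset.mem_cons_self ℓ s))

end LogConvex

theorem weight_seq_prod_le_general (m : ℕ → ℝ) (hm : IsWeightSeq m) (k : ℕ)
    (γ : Fin k → ℕ) (hγ : ∑ i : Fin k, (i.1 + 1) * γ i = k) :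
    m (∑ i : Fin k, γ i) * ∏ i : Fin k, m (i.1 + 1) ^ γ i ≤ m k := by
  let s : Multiset ℕ := ∑ i, Multiset.replicate (γ i) (i.1 + 1)
  have hs : ∀ ℓ ∈ s, 1 ≤ ℓ := by
    simp only [s, Multiset.mem_sum, Multiset.mem_replicate]
    rintro ℓ ⟨i, -, -, rfl⟩
    exact Nat.le_add_left 1 i
  have hcard : Multiset.card s = ∑ i, γ i := by simp [s, Multiset.card_sum]
  have hsum : s.sum = k := by simpa [s, Multiset.sum_sum, mul_comm] using hγ
  have hprod : (s.map m).prod = ∏ i, m (i.1 + 1) ^ γ i := by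
    simp only [s, ← Multiset.coe_mapAddMonoidHom, map_sum]
    simp [Multiset.prod_sum]
  have key := mul_prod_map_le_sum hm.pos hm.logconvex_succ hm.m_one s hs
  rwa [hcard, hsum, hprod] at key

/-- If `γ ∈ Δ(k)`, i.e. `Σ_{ℓ=1}^k ℓ·γ_ℓ = k` (indexing
`γ_ℓ = γ ⟨ℓ-1⟩` over `Fin k`), then `m_{|γ|}·m_1^{γ_1}⋯m_k^{γ_k} ≤ m_k`. -/
theorem weight_seq_prod_le (m : ℕ → ℝ) (hm : IsWeightSeq m) (k : ℕ) (hk : 1 ≤ k)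
    (γ : Fin k → ℕ) (hγ : ∑ i : Fin k, (i.1 + 1) * γ i = k) :
    m (∑ i : Fin k, γ i) * ∏ i : Fin k, m (i.1 + 1) ^ γ i ≤ m k :=
  weight_seq_prod_le_general m hm k γ hγ
end

section
/- Let f : ℝ → ℂ be a smooth function and let k ≥ 1 be an integer. Then the k-th derivative of e^{f(t)} satisfies d^k/dt^k e^{f(t)} = e^{f(t)} · Σ_{γ∈Δ(k)} (k!/γ!) · Π_{ℓ=1}^{k} ( (1/ℓ!)·f^{(ℓ)}(t) )^{γ_ℓ}, where Δ(k) = { γ = (γ_1,…,γ_k) ∈ ℕ₀^k : Σ_{ℓ=1}^{k} ℓ·γ_ℓ = k } and γ! = γ_1!⋯γ_k!. -/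
open scoped BigOperators

open scoped BigOperators ContDiff
open Asymptotics Filter Topology Finset

noncomputable section

namespace FaaExp

/-! ### Monomials -/

def mono (n : ℕ) (c : ℂ) : ℝ → ℂ := fun s => c * (s : ℂ) ^ n

lemma mono_hasDerivAt (n : ℕ) (c : ℂ) (s : ℝ) :
    HasDerivAt (mono n c) (c * n * (s : ℂ) ^ (n - 1)) s := by
  have h := (((hasDerivAt_pow n ((s : ℂ))).const_mul c)).comp_ofReal
  rw [mul_assoc]; exact h

lemma mono_contDiff (n : ℕ) (c : ℂ) : ContDiff ℝ ∞ (mono n c) := by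
  have h : ContDiff ℝ ∞ (fun s : ℝ => (s : ℂ)) := Complex.ofRealCLM.contDiff
  exact contDiff_const.mul (h.pow n)

lemma deriv_mono (n : ℕ) (c : ℂ) :
    deriv (mono (n + 1) c) = mono n (c * (n + 1)) := by
  funext s
  have := (mono_hasDerivAt (n + 1) c s).deriv
  simp only [Nat.add_sub_cancel] at this
  rw [this, mono]
  push_cast
  ring

lemma iteratedDeriv_mono (m n : ℕ) (c : ℂ) (h : m ≤ n) :
    iteratedDeriv m (mono n c) = mono (n - m) (c * (n.descFactorial m : ℂ)) := by
  induction m with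
  | zero => simp [mono]
  | succ m ih =>
    have hm : m ≤ n := le_of_lt (Nat.lt_of_succ_le h)
    rw [iteratedDeriv_succ, ih hm]
    have hnm : n - m = (n - (m + 1)) + 1 := by omega
    rw [hnm, deriv_mono]
    congr 1
    have h2 : ((n - (m+1) : ℕ) : ℂ) + 1 = ((n - m : ℕ) : ℂ) := by
      norm_cast
      omega
    rw [Nat.descFactorial_succ]
    push_cast
    rw [← h2]
    ring

lemma iter_deriv_zero_fun (j : ℕ) : deriv^[j] (fun _ : ℝ => (0 : ℂ)) = fun _ => 0 := by
  induction j with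
  | zero => rfl
  | succ j ih => rw [Function.iterate_succ_apply, deriv_const']; exact ih

lemma iteratedDeriv_mono_zero (m n : ℕ) (c : ℂ) :
    iteratedDeriv m (mono n c) 0 = if n = m then (m.factorial : ℂ) * c else 0 := by
  rcases lt_trichotomy m n with hlt | rfl | hgt
  · rw [iteratedDeriv_mono m n c hlt.le, if_neg (by omega)]
    simp [mono, Nat.sub_ne_zero_of_lt hlt, zero_pow]
  · rw [iteratedDeriv_mono m m c le_rfl, if_pos rfl]
    simp [mono, Nat.descFactorial_self, mul_comm]
  · rw [if_neg (by omega)]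
    obtain ⟨r, hr⟩ : ∃ r, m = (r + 1) + n := ⟨m - n - 1, by omega⟩
    subst hr
    rw [iteratedDeriv_eq_iterate, Function.iterate_add_apply]
    have h1 : deriv^[n] (mono n c) = fun _ : ℝ => (c * (n.descFactorial n : ℂ)) := by
      rw [← iteratedDeriv_eq_iterate, iteratedDeriv_mono n n c le_rfl]
      funext s; simp [mono]
    rw [h1, Function.iterate_succ_apply, deriv_const']
    rw [iter_deriv_zero_fun]

/-! ### Sum and difference rules for iterated derivatives -/

lemma iteratedDeriv_fun_add {F G : ℝ → ℂ} (hf : ContDiff ℝ ∞ F) (hg : ContDiff ℝ ∞ G)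
    (n : ℕ) (x : ℝ) :
    iteratedDeriv n (fun s => F s + G s) x = iteratedDeriv n F x + iteratedDeriv n G x := by
  simp only [iteratedDeriv_eq_iteratedFDeriv]
  rw [show (fun s => F s + G s) = F + G from rfl,
    iteratedFDeriv_add_apply (hf.of_le (by exact_mod_cast le_top)).contDiffAt
      (hg.of_le (by exact_mod_cast le_top)).contDiffAt]
  rfl

lemma iteratedDeriv_fun_sub {F G : ℝ → ℂ} (hf : ContDiff ℝ ∞ F) (hg : ContDiff ℝ ∞ G)
    (n : ℕ) (x : ℝ) :
    iteratedDeriv n (fun s => F s - G s) x = iteratedDeriv n F x - iteratedDeriv n G x := by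
  have h := iteratedDeriv_fun_add hf hg.neg n x
  simp only [sub_eq_add_neg]
  rw [show (fun s => F s + -G s) = (fun s => F s + (fun u => -G u) s) from rfl]
  rw [iteratedDeriv_fun_add hf hg.neg n x, show (fun u => -G u) = -G from rfl, iteratedDeriv_neg]

lemma iteratedDeriv_fun_sum {ι : Type*} (u : Finset ι) (F : ι → ℝ → ℂ)
    (hF : ∀ i ∈ u, ContDiff ℝ ∞ (F i)) (n : ℕ) (x : ℝ) :
    iteratedDeriv n (fun s => ∑ i ∈ u, F i s) x = ∑ i ∈ u, iteratedDeriv n (F i) x := by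
  classical
  induction u using Finset.induction_on with
  | empty =>
    simp only [Finset.sum_empty]
    rw [show (fun _ : ℝ => (0:ℂ)) = (fun _ => 0) from rfl, iteratedDeriv_eq_iterate,
      iter_deriv_zero_fun]
  | @insert a u ha ih =>
    simp only [Finset.sum_insert ha]
    rw [show (fun s => F a s + ∑ i ∈ u, F i s) = (fun s => F a s + (fun v => ∑ i ∈ u, F i v) s)
      from rfl]
    rw [iteratedDeriv_fun_add (hF a (Finset.mem_insert_self a u))
      (ContDiff.sum fun i hi => hF i (Finset.mem_insert_of_mem hi)),
      ih fun i hi => hF i (Finset.mem_insert_of_mem hi)]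

/-! ### Peano-type lemmas -/

lemma pow_isBigO_pow {j m : ℕ} (h : j ≤ m) :
    (fun s : ℝ => s ^ m) =O[𝓝 (0:ℝ)] fun s => s ^ j := by
  rw [isBigO_iff]
  refine ⟨1, ?_⟩
  filter_upwards [Metric.ball_mem_nhds (0:ℝ) one_pos] with s hs
  rw [Metric.mem_ball, Real.dist_eq, sub_zero] at hs
  simp only [Real.norm_eq_abs, abs_pow, one_mul]
  exact pow_le_pow_of_le_one (abs_nonneg s) hs.le h

lemma const_abs_pow_isBigO_pow {j m : ℕ} (h : j ≤ m) (C : ℝ) :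
    (fun s : ℝ => C * |s| ^ m) =O[𝓝 (0:ℝ)] fun s => s ^ j := by
  rw [isBigO_iff]
  refine ⟨|C|, ?_⟩
  filter_upwards [Metric.ball_mem_nhds (0:ℝ) one_pos] with s hs
  rw [Metric.mem_ball, Real.dist_eq, sub_zero] at hs
  simp only [Real.norm_eq_abs, abs_mul, abs_pow, abs_abs]
  exact mul_le_mul_of_nonneg_left (pow_le_pow_of_le_one (abs_nonneg s) hs.le h) (abs_nonneg C)

lemma pow_succ_isLittleO (m : ℕ) :
    (fun s : ℝ => s ^ (m+1)) =o[𝓝 (0:ℝ)] fun s => s ^ m := by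
  have h1 : (fun s : ℝ => s) =o[𝓝 (0:ℝ)] (fun _ => (1:ℝ)) := by
    rw [isLittleO_one_iff]
    exact continuous_id.tendsto (0:ℝ)
  have h2 := h1.mul_isBigO (isBigO_refl (fun s : ℝ => s ^ m) (𝓝 (0:ℝ)))
  have : (fun s : ℝ => s ^ (m+1)) = fun s : ℝ => s * s ^ m := by
    funext s; rw [pow_succ]; ring
  rw [this]
  simpa using h2

lemma cont_isBigO_one {F : ℝ → ℂ} (h : ContinuousAt F 0) :
    F =O[𝓝 (0:ℝ)] fun _ => (1:ℝ) :=
  h.tendsto.isBigO_one ℝ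

lemma isBigO_succ_of_deriv {R : ℝ → ℂ} (hR : ContDiff ℝ ∞ R) (h0 : R 0 = 0) {m : ℕ}
    (hd : deriv R =O[𝓝 (0:ℝ)] fun s => s ^ m) :
    R =O[𝓝 (0:ℝ)] fun s => s ^ (m+1) := by
  obtain ⟨C, hC0, hC⟩ := hd.exists_nonneg
  rw [IsBigOWith] at hC
  rw [Metric.eventually_nhds_iff] at hC
  obtain ⟨δ, hδ, hball⟩ := hC
  rw [isBigO_iff]
  refine ⟨C, ?_⟩
  filter_upwards [Metric.ball_mem_nhds (0:ℝ) hδ] with s hs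
  rw [Metric.mem_ball, Real.dist_eq, sub_zero] at hs
  have hdiff : ∀ x ∈ Set.Icc (-|s|) (|s|), DifferentiableAt ℝ R x := fun x _ =>
    (hR.differentiable (by simp)).differentiableAt
  have hbound : ∀ x ∈ Set.Icc (-|s|) (|s|), ‖deriv R x‖ ≤ C * |s| ^ m := by
    intro x hx
    have hxs : |x| ≤ |s| := abs_le.2 ⟨hx.1, hx.2⟩
    have hxδ : dist x 0 < δ := by
      rw [Real.dist_eq, sub_zero]; exact lt_of_le_of_lt hxs hs
    calc ‖deriv R x‖ ≤ C * ‖x ^ m‖ := hball hxδ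
      _ = C * |x| ^ m := by rw [Real.norm_eq_abs, abs_pow]
      _ ≤ C * |s| ^ m := by gcongr
  have hmem0 : (0:ℝ) ∈ Set.Icc (-|s|) (|s|) := ⟨neg_nonpos.2 (abs_nonneg s), abs_nonneg s⟩
  have hmems : s ∈ Set.Icc (-|s|) (|s|) := ⟨neg_abs_le s, le_abs_self s⟩
  have := (convex_Icc (-|s|) (|s|)).norm_image_sub_le_of_norm_deriv_le hdiff hbound hmem0 hmems
  rw [h0, sub_zero, sub_zero] at this
  calc ‖R s‖ ≤ C * |s| ^ m * ‖s‖ := this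
    _ = C * ‖s ^ (m+1)‖ := by
        rw [Real.norm_eq_abs, Real.norm_eq_abs, abs_pow, pow_succ]; ring

lemma isBigO_of_iteratedDeriv_zero :
    ∀ (m : ℕ) (R : ℝ → ℂ), ContDiff ℝ ∞ R → (∀ j ≤ m, iteratedDeriv j R 0 = 0) →
      R =O[𝓝 (0:ℝ)] fun s => s ^ (m+1) := by
  intro m
  induction m with
  | zero =>
    intro R hR h0
    apply isBigO_succ_of_deriv hR (by simpa using h0 0 le_rfl)
    have hc : Continuous (deriv R) := hR.continuous_deriv (by exact_mod_cast le_top)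
    simpa using cont_isBigO_one hc.continuousAt
  | succ m ih =>
    intro R hR h0
    have hdR : ContDiff ℝ ∞ (deriv R) := (contDiff_infty_iff_deriv.mp hR).2
    have hd : deriv R =O[𝓝 (0:ℝ)] fun s => s ^ (m+1) := by
      apply ih (deriv R) hdR
      intro j hj
      rw [← iteratedDeriv_succ']
      exact h0 (j+1) (Nat.succ_le_succ hj)
    exact isBigO_succ_of_deriv hR (by simpa using h0 0 (Nat.zero_le _)) hd

lemma coeff_eq_zero {c : ℂ} {m : ℕ}
    (h : mono m c =o[𝓝 (0:ℝ)] fun s => s ^ m) : c = 0 := by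
  by_contra hc
  have hcpos : (0:ℝ) < ‖c‖ / 2 := half_pos (norm_pos_iff.2 hc)
  have h2 := h.def hcpos
  have h3 : ∀ᶠ s in 𝓝[≠] (0:ℝ), ‖mono m c s‖ ≤ ‖c‖ / 2 * ‖s ^ m‖ :=
    h2.filter_mono nhdsWithin_le_nhds
  have h4 : ∀ᶠ s in 𝓝[≠] (0:ℝ), s ≠ 0 := eventually_mem_nhdsWithin
  obtain ⟨s, hb, hs0⟩ := (h3.and h4).exists
  have hp : (0:ℝ) < |s| ^ m := pow_pos (abs_pos.2 hs0) m
  have hnorm : ‖mono m c s‖ = ‖c‖ * |s| ^ m := by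
    simp [mono, norm_mul, norm_pow, Complex.norm_real, Real.norm_eq_abs, abs_pow]
  rw [hnorm, Real.norm_eq_abs, abs_pow] at hb
  have : ‖c‖ ≤ ‖c‖ / 2 := le_of_mul_le_mul_right hb hp
  have : (0:ℝ) < ‖c‖ := norm_pos_iff.2 hc
  linarith

lemma iteratedDeriv_eq_zero_of_isLittleO {R : ℝ → ℂ} (hR : ContDiff ℝ ∞ R) {k : ℕ}
    (h : R =o[𝓝 (0:ℝ)] fun s => s ^ k) :
    ∀ j, j ≤ k → iteratedDeriv j R 0 = 0 := by
  intro j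
  induction j using Nat.strong_induction_on with
  | _ j ih =>
    intro hjk
    set c : ℂ := (j.factorial : ℂ)⁻¹ * iteratedDeriv j R 0 with hc
    have hD : ∀ i ≤ j, iteratedDeriv i (fun s => R s - mono j c s) 0 = 0 := by
      intro i hi
      rw [iteratedDeriv_fun_sub hR (mono_contDiff j c), iteratedDeriv_mono_zero]
      rcases eq_or_lt_of_le hi with rfl | hlt
      · rw [if_pos rfl, hc]
        have : (i.factorial : ℂ) ≠ 0 := by exact_mod_cast i.factorial_ne_zero
        field_simp
        simp
      · rw [if_neg (by omega), ih i hlt (le_trans hlt.le hjk), sub_zero]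
    have hO : (fun s => R s - mono j c s) =O[𝓝 (0:ℝ)] fun s => s ^ (j+1) :=
      isBigO_of_iteratedDeriv_zero j _ (hR.sub (mono_contDiff j c)) hD
    have ho : (fun s => R s - mono j c s) =o[𝓝 (0:ℝ)] fun s => s ^ j :=
      hO.trans_isLittleO (pow_succ_isLittleO j)
    have hmono : mono j c =o[𝓝 (0:ℝ)] fun s => s ^ j := by
      have h5 := (h.trans_isBigO (pow_isBigO_pow hjk)).sub ho
      have : (fun s => R s - (R s - mono j c s)) = mono j c := by
        funext s; ring
      rwa [this] at h5
    have hc0 : c = 0 := coeff_eq_zero hmono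
    have hfact : (j.factorial : ℂ) ≠ 0 := by exact_mod_cast j.factorial_ne_zero
    have : iteratedDeriv j R 0 = (j.factorial : ℂ) * c := by
      rw [hc]; field_simp
    rw [this, hc0, mul_zero]

/-! ### Products and exp estimates -/

lemma prod_isBigO_one {ι : Type*} (u : Finset ι) (F : ι → ℝ → ℂ) {l : Filter ℝ}
    (hF : ∀ i ∈ u, F i =O[l] (fun _ => (1:ℝ))) :
    (fun s => ∏ i ∈ u, F i s) =O[l] (fun _ => (1:ℝ)) := by
  classical
  induction u using Finset.induction_on with
  | empty => simpa using isBigO_const_const (1:ℂ) (one_ne_zero (α := ℝ)) l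
  | @insert a u ha ih =>
    simp only [Finset.prod_insert ha]
    have := (hF a (Finset.mem_insert_self a u)).mul
      (ih fun i hi => hF i (Finset.mem_insert_of_mem hi))
    simpa using this

lemma prod_sub_prod_isBigO {ι : Type*} (u : Finset ι) (F G : ι → ℝ → ℂ) (w : ℝ → ℝ)
    {l : Filter ℝ}
    (h1 : ∀ i ∈ u, (fun s => F i s - G i s) =O[l] w)
    (h2 : ∀ i ∈ u, F i =O[l] fun _ => (1:ℝ))
    (h3 : ∀ i ∈ u, G i =O[l] fun _ => (1:ℝ)) :
    (fun s => ∏ i ∈ u, F i s - ∏ i ∈ u, G i s) =O[l] w := by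
  classical
  induction u using Finset.induction_on with
  | empty => simpa using (isBigO_zero (E' := ℂ) w l)
  | @insert a u ha ih =>
    have key : (fun s => ∏ i ∈ insert a u, F i s - ∏ i ∈ insert a u, G i s)
        = fun s => F a s * (∏ i ∈ u, F i s - ∏ i ∈ u, G i s)
            + (F a s - G a s) * ∏ i ∈ u, G i s := by
      funext s; simp only [Finset.prod_insert ha]; ring
    rw [key]
    have t1 := (h2 a (Finset.mem_insert_self a u)).mul
      (ih (fun i hi => h1 i (Finset.mem_insert_of_mem hi))
          (fun i hi => h2 i (Finset.mem_insert_of_mem hi))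
          (fun i hi => h3 i (Finset.mem_insert_of_mem hi)))
    have t2 := (h1 a (Finset.mem_insert_self a u)).mul
      (prod_isBigO_one u G (fun i hi => h3 i (Finset.mem_insert_of_mem hi)))
    have t1' : (fun s => F a s * (∏ i ∈ u, F i s - ∏ i ∈ u, G i s)) =O[l] w := by
      simpa using t1
    have t2' : (fun s => (F a s - G a s) * ∏ i ∈ u, G i s) =O[l] w := by
      simpa using t2
    exact t1'.add t2'

lemma exp_sub_truncation_isBigO {x : ℝ → ℂ} (hx : Tendsto x (𝓝 (0:ℝ)) (𝓝 0)) {n : ℕ}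
    (hn : 0 < n) :
    (fun s => Complex.exp (x s) - ∑ m ∈ range n, (x s) ^ m / m.factorial)
      =O[𝓝 (0:ℝ)] fun s => ‖x s‖ ^ n := by
  rw [isBigO_iff]
  refine ⟨(n.succ : ℝ) * ((n.factorial : ℝ) * n)⁻¹, ?_⟩
  have hev : ∀ᶠ s in 𝓝 (0:ℝ), ‖x s‖ ≤ 1 := by
    have := hx.eventually (Metric.closedBall_mem_nhds (0:ℂ) one_pos)
    filter_upwards [this] with s hs
    simpa [Complex.dist_eq] using hs
  filter_upwards [hev] with s hs
  have hb := Complex.exp_bound hs hn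
  calc ‖Complex.exp (x s) - ∑ m ∈ range n, (x s) ^ m / m.factorial‖
      = ‖Complex.exp (x s) - ∑ m ∈ range n, (x s) ^ m / m.factorial‖ := rfl
    _ ≤ ‖x s‖ ^ n * ((n.succ : ℝ) * ((n.factorial : ℝ) * n)⁻¹) := hb
    _ = (n.succ : ℝ) * ((n.factorial : ℝ) * n)⁻¹ * ‖‖x s‖ ^ n‖ := by
        rw [Real.norm_eq_abs, abs_pow, abs_of_nonneg (norm_nonneg _)]
        ring

end FaaExp


open FaaExp

/-- **Faà di Bruno formula for `e^f`.** For smooth `f : ℝ → ℂ` and `k ≥ 1`,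
`d^k/dt^k e^{f(t)} = e^{f(t)} Σ_{γ∈Δ(k)} (k!/γ!) Π_{ℓ=1}^k ((1/ℓ!) f^{(ℓ)}(t))^{γ_ℓ}`,
where `Δ(k) = {γ ∈ ℕ₀^k : Σ_ℓ ℓ·γ_ℓ = k}` (every `γ ∈ Δ(k)` has `γ_ℓ ≤ k`, so `Δ(k)` is
faithfully enumerated by the bounded multi-indices `γ : Fin k → Fin (k+1)`). -/
theorem faa_di_bruno_exp (f : ℝ → ℂ) (hf : ContDiff ℝ (⊤ : ℕ∞) f) (k : ℕ) (hk : 1 ≤ k) (t : ℝ) :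
    deriv^[k] (fun u : ℝ => Complex.exp (f u)) t =
      Complex.exp (f t) *
        ∑ γ : Fin k → Fin (k + 1),
          if ∑ i : Fin k, (i.1 + 1) * (γ i : ℕ) = k then
            ((Nat.factorial k : ℂ) / ∏ i : Fin k, (Nat.factorial (γ i : ℕ) : ℂ)) *
              ∏ i : Fin k,
                ((Nat.factorial (i.1 + 1) : ℂ)⁻¹ * deriv^[i.1 + 1] f t) ^ (γ i : ℕ)
          else 0 := by
  classical
  simp only [← iteratedDeriv_eq_iterate]
  have hf8 : ContDiff ℝ ∞ f := hf.of_le (by simp)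
  -- abbreviations
  set a : ℕ → ℂ := fun ℓ => ((ℓ.factorial : ℂ))⁻¹ * iteratedDeriv ℓ f t with ha
  set e : (Fin k → Fin (k+1)) → ℕ := fun γ => ∑ i : Fin k, (i.1 + 1) * (γ i : ℕ) with he
  set W : (Fin k → Fin (k+1)) → ℂ :=
    fun γ => Complex.exp (f t) *
      ∏ i : Fin k, (((γ i : ℕ).factorial : ℂ))⁻¹ * a (i.1+1) ^ (γ i : ℕ) with hW
  -- the shifted function and its Taylor polynomial
  have hfs8 : ContDiff ℝ ∞ (fun s : ℝ => f (t + s)) :=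
    hf8.comp (contDiff_const.add contDiff_id)
  have hfs_iter : ∀ j : ℕ, iteratedDeriv j (fun s : ℝ => f (t + s)) 0 = iteratedDeriv j f t := by
    intro j
    rw [iteratedDeriv_comp_const_add j f t]
    simp
  set T : ℝ → ℂ := fun s => ∑ j ∈ Finset.range (k+1), mono j (a j) s with hT
  have hT8 : ContDiff ℝ ∞ T := ContDiff.sum fun i _ => mono_contDiff _ _
  have hT_iter : ∀ j ≤ k, iteratedDeriv j T 0 = (j.factorial : ℂ) * a j := by
    intro j hj
    rw [hT, iteratedDeriv_fun_sum _ _ (fun i _ => mono_contDiff _ _)]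
    rw [Finset.sum_congr rfl fun i _ => iteratedDeriv_mono_zero j i (a i)]
    rw [Finset.sum_ite_eq' (Finset.range (k+1)) j (fun i => (j.factorial : ℂ) * a i)]
    rw [if_pos (Finset.mem_range.2 (Nat.lt_succ_of_le hj))]
  -- the remainder
  set R : ℝ → ℂ := fun s => f (t + s) - T s with hR
  have hR8 : ContDiff ℝ ∞ R := hfs8.sub hT8
  have hR_iter : ∀ j ≤ k, iteratedDeriv j R 0 = 0 := by
    intro j hj
    rw [hR, iteratedDeriv_fun_sub hfs8 hT8, hfs_iter, hT_iter j hj, ha]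
    have : (j.factorial : ℂ) ≠ 0 := by exact_mod_cast j.factorial_ne_zero
    field_simp
    simp
  have hRO : R =O[𝓝 (0:ℝ)] fun s => s ^ (k+1) :=
    isBigO_of_iteratedDeriv_zero k R hR8 hR_iter
  have hR0 : R 0 = 0 := by simpa using hR_iter 0 (Nat.zero_le _)
  have hRtendsto : Tendsto R (𝓝 (0:ℝ)) (𝓝 0) := by
    have := hR8.continuous.tendsto 0
    rwa [hR0] at this
  -- the factors
  set u : Fin k → ℝ → ℂ := fun i s => Complex.exp (a (i.1+1) * (s:ℂ) ^ (i.1+1)) with hu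
  set v : Fin k → ℝ → ℂ :=
    fun i s => ∑ j ∈ Finset.range (k+1), (a (i.1+1) * (s:ℂ) ^ (i.1+1)) ^ j / j.factorial with hv
  have hmono_cont : ∀ i : Fin k, Continuous (fun s : ℝ => a (i.1+1) * (s:ℂ) ^ (i.1+1)) :=
    fun i => (mono_contDiff (i.1+1) (a (i.1+1))).continuous
  have hx_tendsto : ∀ i : Fin k,
      Tendsto (fun s : ℝ => a (i.1+1) * (s:ℂ) ^ (i.1+1)) (𝓝 (0:ℝ)) (𝓝 0) := by
    intro i
    have := (hmono_cont i).tendsto 0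
    simpa using this
  have huv : ∀ i : Fin k, (fun s => u i s - v i s) =O[𝓝 (0:ℝ)] fun s => s ^ (k+1) := by
    intro i
    have h1 := exp_sub_truncation_isBigO (hx_tendsto i) (Nat.succ_pos k)
    refine h1.trans ?_
    have heq : (fun s : ℝ => ‖a (i.1+1) * (s:ℂ) ^ (i.1+1)‖ ^ (k+1))
        = fun s => (‖a (i.1+1)‖) ^ (k+1) * |s| ^ ((i.1+1) * (k+1)) := by
      funext s
      rw [norm_mul, norm_pow, Complex.norm_real, Real.norm_eq_abs, mul_pow, ← pow_mul]
    rw [heq]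
    exact const_abs_pow_isBigO_pow (Nat.le_mul_of_pos_left _ i.1.succ_pos) _
  have hu1 : ∀ i : Fin k, u i =O[𝓝 (0:ℝ)] (fun _ => (1:ℝ)) := fun i =>
    cont_isBigO_one ((Complex.continuous_exp.comp (hmono_cont i)).continuousAt)
  have hv_cont : ∀ i : Fin k, Continuous (v i) := by
    intro i
    apply continuous_finset_sum
    intro j _
    exact ((hmono_cont i).pow j).div_const _
  have hv1 : ∀ i : Fin k, v i =O[𝓝 (0:ℝ)] (fun _ => (1:ℝ)) := fun i =>
    cont_isBigO_one (hv_cont i).continuousAt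
  have hprod : (fun s => ∏ i : Fin k, u i s - ∏ i : Fin k, v i s)
      =O[𝓝 (0:ℝ)] fun s => s ^ (k+1) :=
    prod_sub_prod_isBigO Finset.univ u v _ (fun i _ => huv i) (fun i _ => hu1 i)
      (fun i _ => hv1 i)
  -- exp of remainder
  have hU1 : (fun s => Complex.exp (R s)) =O[𝓝 (0:ℝ)] (fun _ => (1:ℝ)) :=
    cont_isBigO_one ((Complex.continuous_exp.comp hR8.continuous).continuousAt)
  have hUsub : (fun s => Complex.exp (R s) - 1) =O[𝓝 (0:ℝ)] fun s => s ^ (k+1) := by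
    have h1 := exp_sub_truncation_isBigO hRtendsto (n := 1) one_pos
    simp only [Finset.range_one, Finset.sum_singleton, pow_zero, Nat.factorial_zero,
      Nat.cast_one, div_one, pow_one] at h1
    refine h1.trans ?_
    have heq : (fun s : ℝ => ‖R s‖) = fun s => ‖R s‖ := by
      rfl
    rw [heq]
    exact hRO.norm_left
  -- the polynomial approximation
  set Q : ℝ → ℂ := fun s => Complex.exp (f t) * ∏ i : Fin k, v i s with hQ
  set g : ℝ → ℂ := fun s => Complex.exp (f (t + s)) with hg
  have hsplit : ∀ s : ℝ, g s
      = Complex.exp (f t) * ((∏ i : Fin k, u i s) * Complex.exp (R s)) := by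
    intro s
    have hTs : T s = a 0 + ∑ i : Fin k, a (i.1+1) * (s:ℂ) ^ (i.1+1) := by
      simp only [hT]
      rw [Finset.sum_range_succ']
      simp only [mono]
      rw [Finset.sum_range fun i => a (i+1) * (s:ℂ) ^ (i+1)]
      simp [add_comm]
    have ha0 : a 0 = f t := by simp [ha]
    have hfts : f (t + s) = (f t + ∑ i : Fin k, a (i.1+1) * (s:ℂ) ^ (i.1+1)) + R s := by
      simp only [hR]
      rw [hTs, ha0]
      ring
    simp only [hg, hfts, Complex.exp_add, Complex.exp_sum, hu]
    ring
  have hgQ : (fun s => g s - Q s) =O[𝓝 (0:ℝ)] fun s => s ^ (k+1) := by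
    have hkey : (fun s => (∏ i : Fin k, u i s) * Complex.exp (R s)
        - (∏ i : Fin k, v i s) * 1) =O[𝓝 (0:ℝ)] fun s => s ^ (k+1) := by
      have t1 := (prod_isBigO_one Finset.univ u (fun i _ => hu1 i)).mul hUsub
      have t2 := hprod.mul (isBigO_const_const (1:ℂ) (one_ne_zero (α := ℝ)) (𝓝 (0:ℝ)))
      have t1' : (fun s => (∏ i : Fin k, u i s) * (Complex.exp (R s) - 1))
          =O[𝓝 (0:ℝ)] fun s => s ^ (k+1) := by simpa using t1
      have t2' : (fun s => (∏ i : Fin k, u i s - ∏ i : Fin k, v i s) * 1)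
          =O[𝓝 (0:ℝ)] fun s => s ^ (k+1) := by simpa using t2
      have := t1'.add t2'
      refine this.congr_left fun s => ?_
      ring
    have heq : (fun s => g s - Q s)
        = fun s => Complex.exp (f t) * ((∏ i : Fin k, u i s) * Complex.exp (R s)
            - (∏ i : Fin k, v i s) * 1) := by
      funext s
      rw [hsplit s]
      simp only [hQ]
      ring
    rw [heq]
    exact hkey.const_mul_left _
  have hogQ : (fun s => g s - Q s) =o[𝓝 (0:ℝ)] fun s => s ^ k :=
    hgQ.trans_isLittleO (pow_succ_isLittleO k)
  -- rewrite Q as a sum of monomials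
  have hQeq : Q = fun s => ∑ γ : Fin k → Fin (k+1), mono (e γ) (W γ) s := by
    funext s
    simp only [hQ]
    have hvi : ∀ i : Fin k, v i s
        = ∑ j : Fin (k+1), (((j : ℕ).factorial : ℂ))⁻¹ * a (i.1+1) ^ (j:ℕ)
            * (s:ℂ) ^ ((i.1+1) * (j:ℕ)) := by
      intro i
      simp only [hv]
      rw [Finset.sum_range
        (fun j => (a (i.1+1) * (s:ℂ) ^ (i.1+1)) ^ j / (j.factorial : ℂ))]
      refine Finset.sum_congr rfl fun j _ => ?_
      rw [mul_pow, ← pow_mul, div_eq_mul_inv]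
      ring
    simp only [hvi]
    rw [Finset.prod_univ_sum (fun _ : Fin k => (Finset.univ : Finset (Fin (k+1))))]
    rw [Fintype.piFinset_univ]
    rw [Finset.mul_sum]
    refine Finset.sum_congr rfl fun γ _ => ?_
    simp only [mono, hW, he]
    have : ∏ i : Fin k, (((γ i : ℕ).factorial : ℂ))⁻¹ * a (i.1+1) ^ (γ i : ℕ)
        * (s:ℂ) ^ ((i.1+1) * (γ i : ℕ))
        = (∏ i : Fin k, (((γ i : ℕ).factorial : ℂ))⁻¹ * a (i.1+1) ^ (γ i : ℕ))
          * (s:ℂ) ^ (∑ i : Fin k, (i.1+1) * (γ i : ℕ)) := by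
      rw [← Finset.prod_pow_eq_pow_sum, ← Finset.prod_mul_distrib]
    rw [this]
    ring
  have hQ8 : ContDiff ℝ ∞ Q := by
    rw [hQeq]
    exact ContDiff.sum fun γ _ => mono_contDiff _ _
  have hg8 : ContDiff ℝ ∞ g := Complex.contDiff_exp.comp hfs8
  -- the two k-th derivatives agree
  have hDzero := iteratedDeriv_eq_zero_of_isLittleO (hg8.sub hQ8) hogQ k le_rfl
  rw [iteratedDeriv_fun_sub hg8 hQ8] at hDzero
  have hgQderiv : iteratedDeriv k g 0 = iteratedDeriv k Q 0 := sub_eq_zero.mp hDzero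
  -- compute the k-th derivative of Q
  have hQval : iteratedDeriv k Q 0
      = ∑ γ : Fin k → Fin (k+1), if e γ = k then (k.factorial : ℂ) * W γ else 0 := by
    rw [hQeq, iteratedDeriv_fun_sum _ _ (fun γ _ => mono_contDiff _ _)]
    exact Finset.sum_congr rfl fun γ _ => iteratedDeriv_mono_zero k (e γ) (W γ)
  -- the left-hand side
  have hlhs : iteratedDeriv k (fun x : ℝ => Complex.exp (f x)) t = iteratedDeriv k g 0 := by
    rw [hg]
    rw [show (fun s : ℝ => Complex.exp (f (t + s)))
      = fun s : ℝ => (fun x : ℝ => Complex.exp (f x)) (t + s) from rfl]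
    rw [iteratedDeriv_comp_const_add k (fun x : ℝ => Complex.exp (f x)) t]
    simp
  rw [hlhs, hgQderiv, hQval]
  -- final algebraic comparison
  rw [Finset.mul_sum]
  refine Finset.sum_congr rfl fun γ _ => ?_
  rw [mul_ite, mul_zero]
  rcases eq_or_ne (e γ) k with hcond | hcond
  · simp only [if_pos hcond, if_pos (show ∑ i : Fin k, (i.1 + 1) * (γ i : ℕ) = k from hcond), hW, ha]
    rw [Finset.prod_mul_distrib, div_eq_mul_inv, ← Finset.prod_inv_distrib]
    ring
  · rw [if_neg hcond, if_neg hcond]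
end
end

section
/- For every real s > 1 and every real t > 0, t^{1/s} − s·log(1/(1 − s^{−1})) ≤ sup_{j∈ℕ₀} log( t^j/(j!)^s ) ≤ s·t^{1/s}. -/
/-!
Writing `u = t^{1/s}`, each term is `log (t^j / (j!)^s) = s · log (u^j / j!)`, so everything reduces
to bounding `sup_j log (u^j / j!)`. Each `u^j / j!` is a term of the series of `exp u`, which gives the
upper bound `u`. Conversely, if every `u^j / j!` is at most `M`, then for `0 ≤ r < 1` comparison with
a geometric series gives `exp (r u) = ∑ r^j u^j / j! ≤ M / (1 - r)`; taking `r = s⁻¹` gives the lower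
bound.
-/

open Real

lemma log_pow_div_factorial_rpow {s t : ℝ} (hs : s ≠ 0) (ht : 0 < t) (j : ℕ) :
    log (t ^ j / (j.factorial : ℝ) ^ s) = s * log ((t ^ (1 / s)) ^ j / j.factorial) := by
  have hfac : (0 : ℝ) < j.factorial := mod_cast j.factorial_pos
  rw [log_div (by positivity) (by positivity), log_div (by positivity) hfac.ne', log_pow, log_pow,
    log_rpow hfac, log_rpow ht]
  field_simp

lemma log_pow_div_factorial_le {x : ℝ} (hx : 0 < x) (j : ℕ) : log (x ^ j / j.factorial) ≤ x := by
  calc log (x ^ j / j.factorial) ≤ log (exp x) :=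
        log_le_log (by positivity) (pow_div_factorial_le_exp x hx.le j)
    _ = x := log_exp x

lemma bddAbove_range_log_pow_div_factorial {x : ℝ} (hx : 0 < x) :
    BddAbove (Set.range fun j : ℕ => log (x ^ j / j.factorial)) :=
  ⟨x, by rintro _ ⟨j, rfl⟩; exact log_pow_div_factorial_le hx j⟩

lemma exp_mul_le_of_pow_div_factorial_le {x r M : ℝ} (hr₀ : 0 ≤ r) (hr₁ : r < 1)
    (hM : ∀ j : ℕ, x ^ j / j.factorial ≤ M) : exp (r * x) ≤ M / (1 - r) := by
  have hexp : HasSum (fun j : ℕ => (r * x) ^ j / j.factorial) (exp (r * x)) := by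
    rw [exp_eq_exp_ℝ]
    exact NormedSpace.expSeries_div_hasSum_exp (r * x)
  have hgeom : HasSum (fun j : ℕ => M * r ^ j) (M / (1 - r)) := by
    simpa only [div_eq_mul_inv] using (hasSum_geometric_of_lt_one hr₀ hr₁).mul_left M
  refine hasSum_le (fun j => ?_) hexp hgeom
  calc (r * x) ^ j / j.factorial = x ^ j / j.factorial * r ^ j := by ring
    _ ≤ M * r ^ j := mul_le_mul_of_nonneg_right (hM j) (pow_nonneg hr₀ j)

lemma mul_sub_log_le_iSup_log_pow_div_factorial {x r : ℝ} (hx : 0 < x) (hr₀ : 0 ≤ r) (hr₁ : r < 1) :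
    r * x - log (1 / (1 - r)) ≤ ⨆ j : ℕ, log (x ^ j / j.factorial) := by
  set L := ⨆ j : ℕ, log (x ^ j / j.factorial)
  have hM : ∀ j : ℕ, x ^ j / j.factorial ≤ exp L := fun j =>
    (log_le_iff_le_exp (by positivity)).1 (le_ciSup (bddAbove_range_log_pow_div_factorial hx) j)
  have h1r : 0 < 1 - r := sub_pos.2 hr₁
  have := log_le_log (exp_pos _) (exp_mul_le_of_pow_div_factorial_le hr₀ hr₁ hM)
  rw [log_exp, log_div (exp_pos L).ne' h1r.ne', log_exp] at this
  rw [log_div one_ne_zero h1r.ne', log_one]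
  linarith

/-- For every real `s > 1` and `t > 0`,
`t^{1/s} − s·log(1/(1 − s⁻¹)) ≤ sup_{j∈ℕ₀} log(t^j/(j!)^s) ≤ s·t^{1/s}`. -/
theorem gevrey_sup_log_bounds (s t : ℝ) (hs : 1 < s) (ht : 0 < t) :
    t ^ (1 / s) - s * Real.log (1 / (1 - s⁻¹)) ≤
        (⨆ j : ℕ, Real.log (t ^ j / ((Nat.factorial j : ℝ)) ^ s)) ∧
      (⨆ j : ℕ, Real.log (t ^ j / ((Nat.factorial j : ℝ)) ^ s)) ≤ s * t ^ (1 / s) := by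
  have hs₀ : 0 < s := one_pos.trans hs
  set u := t ^ (1 / s)
  have hu : 0 < u := rpow_pos_of_pos ht _
  have hsup : (⨆ j : ℕ, log (t ^ j / (j.factorial : ℝ) ^ s)) =
      s * ⨆ j : ℕ, log (u ^ j / j.factorial) := by
    simp only [log_pow_div_factorial_rpow hs₀.ne' ht, mul_iSup_of_nonneg hs₀.le, u]
  rw [hsup]
  constructor
  · have h := mul_le_mul_of_nonneg_left (mul_sub_log_le_iSup_log_pow_div_factorial hu
      (inv_nonneg.2 hs₀.le) (inv_lt_one_of_one_lt₀ hs)) hs₀.le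
    rwa [mul_sub, ← mul_assoc, mul_inv_cancel₀ hs₀.ne', one_mul] at h
  · exact mul_le_mul_of_nonneg_left (ciSup_le (log_pow_div_factorial_le hu)) hs₀.le
end
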